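/- For all integers m ≥ 2 and j ≥ 1 and all p_1, p_1', p_2, …, p_m ∈ (0,1], one has | f_{m,j}(p_1, p_2, …, p_m) − f_{m,j}(p_1', p_2, …, p_m) | ≤ j | p_1 − p_1' |. -/

import Mathlib

open MeasureTheory

/-- The law of a geometric random variable with success probability `p`,
supported on the positive integers: `P(Y = k) = (1 - p)^(k-1) * p` for `k ≥ 1`. -/
noncomputable def geomMeasure (p : ℝ) : Measure ℕ :=
  Measure.count.withDensity
    (fun k => if 1 ≤ k then ENNReal.ofReal ((1 - p) ^ (k - 1) * p) else 0)

/-- `f_{m,j}(p_1, …, p_m) = P(Y_1 + ⋯ + Y_m > j)` where `Y_1, …, Y_m` are independent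
with `Y_i ~ Geom(p_i)`; realized via the product of the geometric laws. -/
noncomputable def geomF (m j : ℕ) (p : Fin m → ℝ) : ENNReal :=
  Measure.pi (fun i => geomMeasure (p i)) {x | j < ∑ i, x i}

/-! Conditioning on `Y_2, …, Y_m`, with `S = Y_2 + ⋯ + Y_m` the event `Y_1 + S > j` has
probability `(1 - p_1)^(j - S)` by the geometric tail formula (truncated subtraction is exactly
right here: the probability is `1` once `S ≥ j`). Hence `f_{m,j}` is the expectation of
`(1 - p_1)^(j - S)` over the other coordinates, and the claim follows from
`|x^t - y^t| ≤ t |x - y| ≤ j |x - y|` for `x, y ∈ [0, 1]` and `t ≤ j`. -/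

lemma geomMeasure_Ioi {p : ℝ} (hp : p ∈ Set.Ioc 0 1) (t : ℕ) :
    geomMeasure p (Set.Ioi t) = ENNReal.ofReal ((1 - p) ^ t) := by
  have hq : 0 ≤ 1 - p := by linarith [hp.2]
  set f : ℕ → ENNReal := fun k => if 1 ≤ k then ENNReal.ofReal ((1 - p) ^ (k - 1) * p) else 0
  have hterm (n : ℕ) : (Set.Ioi t).indicator f (n + (t + 1)) =
      ENNReal.ofReal ((1 - p) ^ t * p) * ENNReal.ofReal (1 - p) ^ n := by
    rw [Set.indicator_of_mem (by simp; omega), ← ENNReal.ofReal_pow hq,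
      ← ENNReal.ofReal_mul (by have := hp.1; positivity)]
    simp only [f, if_pos (by omega : 1 ≤ n + (t + 1)), show n + (t + 1) - 1 = t + n by omega, pow_add]
    ring_nf
  have hsub : 1 - ENNReal.ofReal (1 - p) = ENNReal.ofReal p := by
    rw [← ENNReal.ofReal_one, ← ENNReal.ofReal_sub _ hq, sub_sub_cancel]
  rw [geomMeasure, withDensity_apply _ measurableSet_Ioi, ← lintegral_indicator measurableSet_Ioi,
    lintegral_count, ← ENNReal.summable.sum_add_tsum_nat_add' (k := t + 1),
    Finset.sum_eq_zero fun k hk => Set.indicator_of_notMem (by simp at hk ⊢; omega) _, zero_add,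
    tsum_congr hterm, ENNReal.tsum_mul_left, ENNReal.tsum_geometric, hsub,
    ENNReal.ofReal_mul (by positivity), mul_assoc,
    ENNReal.mul_inv_cancel (by simpa using hp.1) ENNReal.ofReal_ne_top, mul_one]

lemma geomMeasure_singleton_zero (p : ℝ) : geomMeasure p {0} = 0 := by
  simp [geomMeasure, withDensity_apply _ (measurableSet_singleton 0)]

lemma geomMeasure_setOf_lt_add {p : ℝ} (hp : p ∈ Set.Ioc 0 1) (s t : ℕ) :
    geomMeasure p {k | t < k + s} = ENNReal.ofReal ((1 - p) ^ (t - s)) := by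
  rw [← measure_sdiff_null (geomMeasure_singleton_zero p),
    show {k | t < k + s} \ {0} = Set.Ioi (t - s) by ext k; simp; omega, geomMeasure_Ioi hp]

lemma isProbabilityMeasure_geomMeasure {p : ℝ} (hp : p ∈ Set.Ioc 0 1) :
    IsProbabilityMeasure (geomMeasure p) := by
  constructor
  rw [← measure_sdiff_null (geomMeasure_singleton_zero p),
    show Set.univ \ {0} = Set.Ioi 0 by ext k; simp, geomMeasure_Ioi hp, pow_zero,
    ENNReal.ofReal_one]

lemma abs_pow_sub_pow_le_of_abs_le_one {α : Type*} [CommRing α] [LinearOrder α] [IsOrderedRing α]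
    {x y : α} (hx : |x| ≤ 1) (hy : |y| ≤ 1) (t : ℕ) : |x ^ t - y ^ t| ≤ t * |x - y| :=
  calc |x ^ t - y ^ t| ≤ |x - y| * t * max |x| |y| ^ (t - 1) := abs_pow_sub_pow_le x y t
    _ ≤ |x - y| * t * 1 := by gcongr; exact pow_le_one₀ (by positivity) (max_le hx hy)
    _ = t * |x - y| := by ring

lemma geomF_succ {n : ℕ} (j : ℕ) {p : Fin (n + 1) → ℝ} (hp : ∀ i, p i ∈ Set.Ioc 0 1) :
    geomF (n + 1) j p = ∫⁻ y, ENNReal.ofReal ((1 - p 0) ^ (j - ∑ i, y i))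
      ∂Measure.pi fun i => geomMeasure (Fin.tail p i) := by
  have := fun i => isProbabilityMeasure_geomMeasure (hp i)
  let T : Set (ℕ × (Fin n → ℕ)) := {z | j < z.1 + ∑ i, z.2 i}
  have hT : MeasurableSet T := .of_discrete
  have hpre : {x : Fin (n + 1) → ℕ | j < ∑ i, x i} =
      MeasurableEquiv.piFinSuccAbove (fun _ => ℕ) 0 ⁻¹' T := by
    ext x
    simp [T, MeasurableEquiv.piFinSuccAbove_apply, Fin.sum_univ_succ, Fin.tail]
  rw [geomF, hpre, (measurePreserving_piFinSuccAbove _ 0).measure_preimage hT.nullMeasurableSet,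
    Measure.prod_apply_symm hT]
  exact lintegral_congr fun y => geomMeasure_setOf_lt_add (hp 0) (∑ i, y i) j

lemma geomF_succ_toReal {n : ℕ} (j : ℕ) {p : Fin (n + 1) → ℝ} (hp : ∀ i, p i ∈ Set.Ioc 0 1) :
    (geomF (n + 1) j p).toReal = ∫ y, (1 - p 0) ^ (j - ∑ i, y i)
      ∂Measure.pi fun i => geomMeasure (Fin.tail p i) := by
  rw [geomF_succ j hp, integral_eq_lintegral_of_nonneg_ae
    (ae_of_all _ fun _ => pow_nonneg (sub_nonneg.2 (hp 0).2) _)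
    Measurable.of_discrete.aestronglyMeasurable]

lemma integrable_pow_of_abs_le_one {α : Type*} [MeasurableSpace α] [DiscreteMeasurableSpace α]
    {μ : Measure α} [IsFiniteMeasure μ] {x : ℝ} (hx : |x| ≤ 1) (k : α → ℕ) :
    Integrable (fun a => x ^ k a) μ :=
  .of_bound Measurable.of_discrete.aestronglyMeasurable 1 (ae_of_all _ fun a => by
    rw [Real.norm_eq_abs, abs_pow]
    exact pow_le_one₀ (abs_nonneg x) hx)

lemma abs_integral_sub_integral_le {α : Type*} [MeasurableSpace α] {μ : Measure α}
    [IsProbabilityMeasure μ] {f g : α → ℝ} (hf : Integrable f μ) (hg : Integrable g μ) {C : ℝ}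
    (hfg : ∀ᵐ x ∂μ, |f x - g x| ≤ C) : |∫ x, f x ∂μ - ∫ x, g x ∂μ| ≤ C := by
  rw [← integral_sub hf hg]
  simpa using norm_integral_le_of_norm_le_const (f := fun x => f x - g x) hfg

/-- For all integers `m ≥ 2`, `j ≥ 1` and all
`p_1, p_1', p_2, …, p_m ∈ (0,1]`,
`|f_{m,j}(p_1, p_2, …, p_m) − f_{m,j}(p_1', p_2, …, p_m)| ≤ j |p_1 − p_1'|`. -/
theorem geomF_lipschitz_first_coordinate
    (m j : ℕ) (hm : 2 ≤ m)
    (p : Fin m → ℝ) (hp : ∀ i, p i ∈ Set.Ioc (0 : ℝ) 1)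
    (p₁' : ℝ) (hp₁' : p₁' ∈ Set.Ioc (0 : ℝ) 1) :
    |(geomF m j p).toReal
        - (geomF m j (Function.update p ⟨0, by omega⟩ p₁')).toReal|
      ≤ j * |p ⟨0, by omega⟩ - p₁'| := by
  obtain ⟨n, rfl⟩ : ∃ n, m = n + 1 := ⟨m - 1, by omega⟩
  change |(geomF (n + 1) j p).toReal - (geomF (n + 1) j (Function.update p 0 p₁')).toReal|
    ≤ j * |p 0 - p₁'|
  have hq : ∀ i, Function.update p 0 p₁' i ∈ Set.Ioc 0 1 := by
    intro i
    rcases eq_or_ne i 0 with rfl | hi <;> simp [*]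
  have : ∀ i, IsProbabilityMeasure (geomMeasure (Fin.tail p i)) :=
    fun i => isProbabilityMeasure_geomMeasure (hp i.succ)
  have habs : ∀ x ∈ Set.Ioc (0 : ℝ) 1, |1 - x| ≤ 1 :=
    fun x hx => abs_le.2 ⟨by linarith [hx.2], by linarith [hx.1]⟩
  rw [geomF_succ_toReal j hp, geomF_succ_toReal j hq, Fin.tail_update_zero, Function.update_self]
  refine abs_integral_sub_integral_le (integrable_pow_of_abs_le_one (habs _ (hp 0)) _)
    (integrable_pow_of_abs_le_one (habs _ hp₁') _) (ae_of_all _ fun y => ?_)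
  calc |(1 - p 0) ^ (j - ∑ i, y i) - (1 - p₁') ^ (j - ∑ i, y i)|
      ≤ (j - ∑ i, y i : ℕ) * |(1 - p 0) - (1 - p₁')| :=
        abs_pow_sub_pow_le_of_abs_le_one (habs _ (hp 0)) (habs _ hp₁') _
    _ ≤ j * |p 0 - p₁'| := by
        rw [sub_sub_sub_cancel_left, abs_sub_comm]
        gcongr
        exact_mod_cast Nat.sub_le _ _
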